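/- The set of slowly oscillating operators is a unital norm-closed *-subalgebra of M(A). If in addition for every a ∈ A, R > 0 and ε > 0 there is n₀ such that ‖(1 − f_n) T a‖ ≤ ε and ‖a T (1 − f_n)‖ ≤ ε for all n ≥ n₀ and all T ∈ V_R with ‖T‖ ≤ 1, then the set of slowly oscillating operators contains A. -/

import Mathlib

open Filter

variable {H : Type*} [NormedAddCommGroup H] [InnerProductSpace ℂ H] [CompleteSpace H]

/-- The idealizer (multiplier algebra) of a concrete C*-algebra `A ⊆ B(H)`:
operators `S` with `S·a ∈ A` and `a·S ∈ A` for all `a ∈ A`. -/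
def idealizer (A : NonUnitalStarSubalgebra ℂ (H →L[ℂ] H)) : Set (H →L[ℂ] H) :=
  {S | ∀ a, a ∈ A → S * a ∈ A ∧ a * S ∈ A}

/-- The set of slowly oscillating operators relative to the filtration `V` and the
approximate unit `f`. -/
def slowlyOscSet (A : NonUnitalStarSubalgebra ℂ (H →L[ℂ] H))
    (V : ℝ → Set (H →L[ℂ] H)) (f : ℕ → (H →L[ℂ] H)) : Set (H →L[ℂ] H) :=
  {S | S ∈ idealizer A ∧ ∀ R > (0 : ℝ), ∀ ε > (0 : ℝ), ∃ n₀ : ℕ, ∀ n ≥ n₀,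
    ∀ T ∈ V R, ‖T‖ ≤ 1 →
      ‖(1 - f n) * (T * S - S * T)‖ ≤ ε ∧ ‖(T * S - S * T) * (1 - f n)‖ ≤ ε}

open Topology Metric

/-! Write `(1 - f n)[T, S]` for the tail commutator. Slow oscillation of `S` says that it tends to
zero uniformly on each test set, and, taking adjoints, that the same holds for `S*`. Uniform
convergence to zero survives sums and multiplication by fixed operators, so for a product the
only new term in
`(1 - f n)[T, S₁S₂] = (1 - f n)[T, S₁] S₂ + S₁ (1 - f n)[T, S₂] + [S₁, f n][T, S₂]`
is the last one, which vanishes by quasicentrality. The tail commutator is Lipschitz in `S`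
uniformly in `n` and `T`, which gives closedness; and for `a ∈ A`,
`(1 - f n)[T, a] = (1 - f n) T a - ((1 - f n) a) T` is small: the first term by hypothesis,
the second since `f` is an approximate unit. -/

section UniformSmallness

variable {ι α E : Type*} [SeminormedAddCommGroup E] {p : Filter ι} {F : ι → α → E} {s : Set α}

theorem tendstoUniformlyOn_zero_iff_eventually_norm_le :
    TendstoUniformlyOn F 0 p s ↔ ∀ ε > 0, ∀ᶠ n in p, ∀ x ∈ s, ‖F n x‖ ≤ ε := by
  simp only [Metric.tendstoUniformlyOn_iff, Pi.zero_apply, dist_zero_left]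
  exact ⟨fun h ε hε => (h ε hε).mono fun _ hn x hx => (hn x hx).le,
    fun h ε hε => (h (ε / 2) (half_pos hε)).mono fun _ hn x hx =>
      (hn x hx).trans_lt (half_lt_self hε)⟩

theorem tendstoUniformlyOn_zero_of_norm_le {g : ι → ℝ} (hg : Tendsto g p (𝓝 0))
    (hF : ∀ n, ∀ x ∈ s, ‖F n x‖ ≤ g n) : TendstoUniformlyOn F 0 p s :=
  tendstoUniformlyOn_zero_iff_eventually_norm_le.2 fun _ hε =>
    (hg.eventually (ge_mem_nhds hε)).mono fun n hn x hx => (hF n x hx).trans hn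

theorem tendstoUniformlyOn_zero_of_forall_approx
    (h : ∀ δ > 0, ∃ G : ι → α → E, TendstoUniformlyOn G 0 p s ∧
      ∀ n, ∀ x ∈ s, ‖F n x - G n x‖ ≤ δ) :
    TendstoUniformlyOn F 0 p s := by
  refine tendstoUniformlyOn_zero_iff_eventually_norm_le.2 fun ε hε => ?_
  obtain ⟨G, hG, hFG⟩ := h (ε / 2) (half_pos hε)
  filter_upwards [tendstoUniformlyOn_zero_iff_eventually_norm_le.1 hG (ε / 2) (half_pos hε)]
    with n hn x hx
  calc ‖F n x‖ ≤ ‖F n x - G n x‖ + ‖G n x‖ := norm_le_norm_sub_add _ _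
    _ ≤ ε / 2 + ε / 2 := add_le_add (hFG n x hx) (hn x hx)
    _ = ε := add_halves ε

theorem tendstoUniformlyOn_comp_star_iff [InvolutiveStar α] (hs : ∀ x ∈ s, star x ∈ s) :
    TendstoUniformlyOn (fun n x => F n (star x)) 0 p s ↔ TendstoUniformlyOn F 0 p s := by
  have hstar (P : α → Prop) : (∀ x ∈ s, P (star x)) ↔ ∀ x ∈ s, P x :=
    ⟨fun h x hx => star_star x ▸ h _ (hs x hx), fun h x hx => h _ (hs x hx)⟩
  simp only [tendstoUniformlyOn_zero_iff_eventually_norm_le]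
  exact forall₂_congr fun ε _ => eventually_congr (.of_forall fun n => hstar fun x => ‖F n x‖ ≤ ε)

end UniformSmallness

section TailCommutator

variable {𝔸 : Type*} [NormedRing 𝔸]

def tailCommutator (f : ℕ → 𝔸) (S : 𝔸) (n : ℕ) (T : 𝔸) : 𝔸 :=
  (1 - f n) * (T * S - S * T)

variable {f : ℕ → 𝔸} {s : Set 𝔸}

theorem tailCommutator_add (S₁ S₂ : 𝔸) :
    tailCommutator f (S₁ + S₂) = tailCommutator f S₁ + tailCommutator f S₂ := by
  ext n T
  simp only [tailCommutator, Pi.add_apply]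
  noncomm_ring

theorem tailCommutator_sub (S₁ S₂ : 𝔸) (n : ℕ) (T : 𝔸) :
    tailCommutator f (S₁ - S₂) n T = tailCommutator f S₁ n T - tailCommutator f S₂ n T := by
  simp only [tailCommutator]
  noncomm_ring

theorem tailCommutator_algebraMap {𝕜 : Type*} [CommSemiring 𝕜] [Algebra 𝕜 𝔸] (c : 𝕜) :
    tailCommutator f (algebraMap 𝕜 𝔸 c) = 0 := by
  ext n T
  simp [tailCommutator, Algebra.commutes]

theorem tailCommutator_mul (S₁ S₂ : 𝔸) (n : ℕ) (T : 𝔸) :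
    tailCommutator f (S₁ * S₂) n T = tailCommutator f S₁ n T * S₂ + S₁ * tailCommutator f S₂ n T
      + (S₁ * f n - f n * S₁) * (T * S₂ - S₂ * T) := by
  simp only [tailCommutator]
  noncomm_ring

theorem norm_commutator_le {T : 𝔸} (hT : ‖T‖ ≤ 1) (S : 𝔸) : ‖T * S - S * T‖ ≤ 2 * ‖S‖ :=
  calc ‖T * S - S * T‖ ≤ ‖T‖ * ‖S‖ + ‖S‖ * ‖T‖ :=
        (norm_sub_le _ _).trans (add_le_add (norm_mul_le _ _) (norm_mul_le _ _))
    _ ≤ 2 * ‖S‖ := by nlinarith [norm_nonneg S]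

theorem TendstoUniformlyOn.tailCommutator_mul {S₁ S₂ : 𝔸}
    (h₁ : TendstoUniformlyOn (tailCommutator f S₁) 0 atTop s)
    (h₂ : TendstoUniformlyOn (tailCommutator f S₂) 0 atTop s)
    (hquasi : Tendsto (fun n => ‖f n * S₁ - S₁ * f n‖) atTop (𝓝 0))
    (hs : s ⊆ closedBall 0 1) :
    TendstoUniformlyOn (tailCommutator f (S₁ * S₂)) 0 atTop s := by
  have h₁' : TendstoUniformlyOn (fun n T => tailCommutator f S₁ n T * S₂) 0 atTop s := by
    simpa [Function.comp_def, ← Pi.zero_def] using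
      (uniformContinuous_mul_right' S₂).comp_tendstoUniformlyOn h₁
  have h₂' : TendstoUniformlyOn (fun n T => S₁ * tailCommutator f S₂ n T) 0 atTop s := by
    simpa [Function.comp_def, ← Pi.zero_def] using
      (uniformContinuous_mul_left' S₁).comp_tendstoUniformlyOn h₂
  have h₃ : TendstoUniformlyOn (fun n T => (S₁ * f n - f n * S₁) * (T * S₂ - S₂ * T))
      0 atTop s := by
    refine tendstoUniformlyOn_zero_of_norm_le (by simpa using hquasi.mul_const (2 * ‖S₂‖))
      fun n T hT => norm_mul_le_of_le (norm_sub_rev _ _).le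
        (norm_commutator_le (mem_closedBall_zero_iff.1 (hs hT)) S₂)
  convert (h₁'.add h₂').add h₃ using 1
  · ext n T
    exact _root_.tailCommutator_mul S₁ S₂ n T
  · simp

theorem TendstoUniformlyOn.tailCommutator_of_tendsto {a : 𝔸}
    (hTa : TendstoUniformlyOn (fun n T => (1 - f n) * T * a) 0 atTop s)
    (ha : Tendsto (fun n => ‖f n * a - a‖) atTop (𝓝 0)) (hs : s ⊆ closedBall 0 1) :
    TendstoUniformlyOn (tailCommutator f a) 0 atTop s := by
  have haT : TendstoUniformlyOn (fun n T => (1 - f n) * a * T) 0 atTop s := by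
    refine tendstoUniformlyOn_zero_of_norm_le ha fun n T hT => ?_
    have h₁ : ‖(1 - f n) * a‖ ≤ ‖f n * a - a‖ := by rw [sub_mul, one_mul, norm_sub_rev]
    exact (norm_mul_le_of_le h₁ (mem_closedBall_zero_iff.1 (hs hT))).trans_eq (mul_one _)
  convert hTa.sub haT using 1
  · ext n T
    simp only [tailCommutator, Pi.sub_apply]
    noncomm_ring
  · simp

theorem isClosed_setOf_tendstoUniformlyOn_tailCommutator {C : ℝ} (hC : ∀ n, ‖1 - f n‖ ≤ C)
    (hs : s ⊆ closedBall 0 1) :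
    IsClosed {S | TendstoUniformlyOn (tailCommutator f S) 0 atTop s} := by
  have hC₀ : 0 ≤ C := (norm_nonneg _).trans (hC 0)
  refine isClosed_of_closure_subset fun S hS =>
    tendstoUniformlyOn_zero_of_forall_approx fun δ hδ => ?_
  obtain ⟨S', hS', hSS'⟩ := Metric.mem_closure_iff.1 hS (δ / (2 * C + 1)) (by positivity)
  refine ⟨_, hS', fun n T hT => ?_⟩
  rw [← tailCommutator_sub]
  calc ‖tailCommutator f (S - S') n T‖ ≤ C * (2 * ‖S - S'‖) :=
        norm_mul_le_of_le (hC n) (norm_commutator_le (mem_closedBall_zero_iff.1 (hs hT)) _)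
    _ ≤ (2 * C + 1) * (δ / (2 * C + 1)) := by
        have hη : ‖S - S'‖ ≤ δ / (2 * C + 1) := (dist_eq_norm S S' ▸ hSS').le
        nlinarith [norm_nonneg (S - S')]
    _ = δ := mul_div_cancel₀ δ (by positivity)

variable [StarRing 𝔸] [NormedStarGroup 𝔸] {n : ℕ}

theorem norm_commutator_mul_one_sub (hf : IsSelfAdjoint (f n)) (S T : 𝔸) :
    ‖(T * S - S * T) * (1 - f n)‖ = ‖tailCommutator f (star S) n (star T)‖ := by
  rw [← norm_neg, ← norm_star]
  simp only [tailCommutator, star_neg, star_mul, star_sub, star_one, hf.star_eq]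
  noncomm_ring

theorem norm_mul_mul_one_sub (hf : IsSelfAdjoint (f n)) (a T : 𝔸) :
    ‖a * T * (1 - f n)‖ = ‖(1 - f n) * star T * star a‖ := by
  rw [← norm_star]
  simp only [star_mul, star_sub, star_one, hf.star_eq, mul_assoc]

end TailCommutator

section SlowlyOscillating

variable {𝕜 𝔸 ι : Type*} [CommSemiring 𝕜] [StarRing 𝕜] [NormedRing 𝔸] [StarRing 𝔸]
  [Algebra 𝕜 𝔸] [StarModule 𝕜 𝔸]

/-- Only the left condition `(1 - f n)[T, S] → 0` is recorded, for both `S` and `star S`: for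
self-adjoint `f n` and star-closed test sets the right condition `[T, S](1 - f n) → 0` is its
adjoint (`norm_commutator_mul_one_sub`), and this form is visibly closed under `star`. -/
def slowlyOscStarSubalgebra (M : StarSubalgebra 𝕜 𝔸) (f : ℕ → 𝔸) (s : ι → Set 𝔸)
    (hs : ∀ i, s i ⊆ closedBall 0 1)
    (hquasi : ∀ S ∈ M, Tendsto (fun n => ‖f n * S - S * f n‖) atTop (𝓝 0)) :
    StarSubalgebra 𝕜 𝔸 where
  carrier := {S | S ∈ M ∧ ∀ i, TendstoUniformlyOn (tailCommutator f S) 0 atTop (s i) ∧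
    TendstoUniformlyOn (tailCommutator f (star S)) 0 atTop (s i)}
  mul_mem' := by
    rintro S₁ S₂ ⟨hM₁, h₁⟩ ⟨hM₂, h₂⟩
    refine ⟨M.mul_mem hM₁ hM₂, fun i => ⟨?_, ?_⟩⟩
    · exact (h₁ i).1.tailCommutator_mul (h₂ i).1 (hquasi S₁ hM₁) (hs i)
    · rw [star_mul]
      exact (h₂ i).2.tailCommutator_mul (h₁ i).2 (hquasi _ (star_mem hM₂)) (hs i)
  add_mem' := by
    rintro S₁ S₂ ⟨hM₁, h₁⟩ ⟨hM₂, h₂⟩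
    refine ⟨M.add_mem hM₁ hM₂, fun i => ⟨?_, ?_⟩⟩
    · simpa [tailCommutator_add] using (h₁ i).1.add (h₂ i).1
    · simpa [tailCommutator_add] using (h₁ i).2.add (h₂ i).2
  algebraMap_mem' c := by
    refine ⟨M.algebraMap_mem c, fun i => ?_⟩
    simp only [← algebraMap_star_comm, tailCommutator_algebraMap, and_self]
    exact tendsto_const_nhds.tendstoUniformlyOn_const (s i)
  star_mem' := by
    rintro S ⟨hM, h⟩
    exact ⟨star_mem hM, fun i => by simpa only [star_star] using (h i).symm⟩

theorem mem_slowlyOscStarSubalgebra_of_mem_closure [NormedStarGroup 𝔸]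
    {M : StarSubalgebra 𝕜 𝔸} {f : ℕ → 𝔸} {s : ι → Set 𝔸} {hs : ∀ i, s i ⊆ closedBall 0 1}
    {hquasi : ∀ S ∈ M, Tendsto (fun n => ‖f n * S - S * f n‖) atTop (𝓝 0)} {C : ℝ}
    (hC : ∀ n, ‖1 - f n‖ ≤ C) {S : 𝔸} (hS : S ∈ M)
    (hcl : S ∈ closure (slowlyOscStarSubalgebra M f s hs hquasi : Set 𝔸)) :
    S ∈ slowlyOscStarSubalgebra M f s hs hquasi := by
  have hclosed : IsClosed {S : 𝔸 | ∀ i, TendstoUniformlyOn (tailCommutator f S) 0 atTop (s i) ∧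
      TendstoUniformlyOn (tailCommutator f (star S)) 0 atTop (s i)} := by
    simp only [Set.ofPred_forall, Set.ofPred_and]
    exact isClosed_iInter fun i =>
      (isClosed_setOf_tendstoUniformlyOn_tailCommutator hC (hs i)).inter
        ((isClosed_setOf_tendstoUniformlyOn_tailCommutator hC (hs i)).preimage continuous_star)
  exact ⟨hS, hclosed.closure_subset (closure_mono (fun _ h => h.2) hcl)⟩

end SlowlyOscillating

section MultiplierAlgebra

variable (A : NonUnitalStarSubalgebra ℂ (H →L[ℂ] H))

def idealizerStarSubalgebra : StarSubalgebra ℂ (H →L[ℂ] H) where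
  carrier := idealizer A
  mul_mem' {S₁ S₂} h₁ h₂ a ha :=
    ⟨mul_assoc S₁ S₂ a ▸ (h₁ _ (h₂ a ha).1).1, (mul_assoc a S₁ S₂).symm ▸ (h₂ _ (h₁ a ha).2).2⟩
  add_mem' {S₁ S₂} h₁ h₂ a ha :=
    ⟨add_mul S₁ S₂ a ▸ A.add_mem (h₁ a ha).1 (h₂ a ha).1,
      (mul_add a S₁ S₂).symm ▸ A.add_mem (h₁ a ha).2 (h₂ a ha).2⟩
  algebraMap_mem' c a ha := by
    simpa [Algebra.algebraMap_eq_smul_one] using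
      And.intro (SMulMemClass.smul_mem c ha) (SMulMemClass.smul_mem c ha)
  star_mem' {S} h a ha := by
    simpa using And.intro (star_mem (h _ (star_mem ha)).2) (star_mem (h _ (star_mem ha)).1)

variable {A}

theorem mem_idealizer_of_mem {a : H →L[ℂ] H} (ha : a ∈ A) : a ∈ idealizer A :=
  fun _ hb => ⟨A.mul_mem ha hb, A.mul_mem hb ha⟩

variable (V : ℝ → Set (H →L[ℂ] H)) (f : ℕ → (H →L[ℂ] H))

theorem star_mem_inter_closedBall
    (hVstar : ∀ r : ℝ, ∀ T ∈ V r, ContinuousLinearMap.adjoint T ∈ V r) (R : ℝ) :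
    ∀ T ∈ V R ∩ closedBall 0 1, star T ∈ V R ∩ closedBall 0 1 :=
  fun T hT => ⟨hVstar R T hT.1, by simpa using hT.2⟩

theorem slowlyOscSet_eq (hVstar : ∀ r : ℝ, ∀ T ∈ V r, ContinuousLinearMap.adjoint T ∈ V r)
    (hf : ∀ n, IsSelfAdjoint (f n))
    (hquasi : ∀ S ∈ idealizer A, Tendsto (fun n => ‖f n * S - S * f n‖) atTop (𝓝 0)) :
    slowlyOscSet A V f = slowlyOscStarSubalgebra (idealizerStarSubalgebra A) f
      (fun R : Set.Ioi (0 : ℝ) => V R ∩ closedBall 0 1) (fun _ => Set.inter_subset_right)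
      hquasi := by
  ext S
  refine and_congr_right fun _ => ?_
  rw [Subtype.forall]
  refine forall₂_congr fun R _ => ?_
  rw [← tendstoUniformlyOn_comp_star_iff (F := tailCommutator f (star S))
      (star_mem_inter_closedBall V hVstar R),
    tendstoUniformlyOn_zero_iff_eventually_norm_le, tendstoUniformlyOn_zero_iff_eventually_norm_le]
  simp only [← norm_commutator_mul_one_sub (hf _), ← forall₂_and, ← eventually_and]
  simp only [eventually_atTop, Set.mem_inter_iff, mem_closedBall_zero_iff, and_imp, tailCommutator]

theorem mem_slowlyOscSet_of_mem
    (hVstar : ∀ r : ℝ, ∀ T ∈ V r, ContinuousLinearMap.adjoint T ∈ V r)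
    (hf : ∀ n, IsSelfAdjoint (f n))
    (happrox : ∀ a ∈ A, Tendsto (fun n => ‖f n * a - a‖) atTop (𝓝 0))
    (hquasi : ∀ S ∈ idealizer A, Tendsto (fun n => ‖f n * S - S * f n‖) atTop (𝓝 0))
    (hA : ∀ a ∈ A, ∀ R > (0 : ℝ), ∀ ε > (0 : ℝ), ∃ n₀ : ℕ, ∀ n ≥ n₀, ∀ T ∈ V R, ‖T‖ ≤ 1 →
      ‖(1 - f n) * T * a‖ ≤ ε ∧ ‖a * T * (1 - f n)‖ ≤ ε)
    {a : H →L[ℂ] H} (ha : a ∈ A) : a ∈ slowlyOscSet A V f := by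
  rw [slowlyOscSet_eq V f hVstar hf hquasi]
  refine ⟨mem_idealizer_of_mem ha, fun ⟨R, hR⟩ => ?_⟩
  have hsmall : ∀ ε > 0, ∀ᶠ n in atTop, ∀ T ∈ V R ∩ closedBall 0 1,
      ‖(1 - f n) * T * a‖ ≤ ε ∧ ‖a * T * (1 - f n)‖ ≤ ε := fun ε hε => by
    simpa only [eventually_atTop, Set.mem_inter_iff, mem_closedBall_zero_iff, and_imp]
      using hA a ha R hR ε hε
  have hleft : TendstoUniformlyOn (fun n T => (1 - f n) * T * a) 0 atTop
      (V R ∩ closedBall 0 1) :=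
    tendstoUniformlyOn_zero_iff_eventually_norm_le.2 fun ε hε =>
      (hsmall ε hε).mono fun _ hn T hT => (hn T hT).1
  have hright : TendstoUniformlyOn (fun n T => (1 - f n) * T * star a) 0 atTop
      (V R ∩ closedBall 0 1) := by
    rw [← tendstoUniformlyOn_comp_star_iff (star_mem_inter_closedBall V hVstar R),
      tendstoUniformlyOn_zero_iff_eventually_norm_le]
    exact fun ε hε => (hsmall ε hε).mono fun n hn T hT =>
      (norm_mul_mul_one_sub (hf n) a T).symm.trans_le (hn T hT).2
  exact ⟨hleft.tailCommutator_of_tendsto (happrox a ha) Set.inter_subset_right,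
    hright.tailCommutator_of_tendsto (happrox _ (star_mem ha)) Set.inter_subset_right⟩

end MultiplierAlgebra

theorem slowlyOscSet_is_unital_closed_starSubalgebra_general
    (A : NonUnitalStarSubalgebra ℂ (H →L[ℂ] H))
    (V : ℝ → Set (H →L[ℂ] H))
    (hVstar : ∀ r : ℝ, ∀ T ∈ V r, ContinuousLinearMap.adjoint T ∈ V r)
    (f : ℕ → (H →L[ℂ] H))
    (hfpos : ∀ n, (f n).IsPositive) (hfnorm : ∀ n, ‖f n‖ ≤ 1)
    (happrox : ∀ a ∈ A, Tendsto (fun n => ‖f n * a - a‖) atTop (nhds 0))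
    (hquasi : ∀ S ∈ idealizer A, Tendsto (fun n => ‖f n * S - S * f n‖) atTop (nhds 0)) :
    ((1 : H →L[ℂ] H) ∈ slowlyOscSet A V f) ∧
    (∀ S₁ ∈ slowlyOscSet A V f, ∀ S₂ ∈ slowlyOscSet A V f,
      S₁ + S₂ ∈ slowlyOscSet A V f) ∧
    (∀ c : ℂ, ∀ S ∈ slowlyOscSet A V f, c • S ∈ slowlyOscSet A V f) ∧
    (∀ S₁ ∈ slowlyOscSet A V f, ∀ S₂ ∈ slowlyOscSet A V f,
      S₁ * S₂ ∈ slowlyOscSet A V f) ∧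
    (∀ S ∈ slowlyOscSet A V f, ContinuousLinearMap.adjoint S ∈ slowlyOscSet A V f) ∧
    (∀ S ∈ idealizer A, S ∈ closure (slowlyOscSet A V f) → S ∈ slowlyOscSet A V f) ∧
    ((∀ a ∈ A, ∀ R > (0 : ℝ), ∀ ε > (0 : ℝ), ∃ n₀ : ℕ, ∀ n ≥ n₀, ∀ T ∈ V R, ‖T‖ ≤ 1 →
        ‖(1 - f n) * T * a‖ ≤ ε ∧ ‖a * T * (1 - f n)‖ ≤ ε) →
      ∀ a ∈ A, a ∈ slowlyOscSet A V f) := by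
  have hf : ∀ n, IsSelfAdjoint (f n) := fun n => (hfpos n).isSelfAdjoint
  have hC : ∀ n, ‖1 - f n‖ ≤ 1 + 1 := fun n =>
    norm_sub_le_of_le ContinuousLinearMap.norm_id_le (hfnorm n)
  refine ⟨?_, ?_, ?_, ?_, ?_, ?_,
    fun hA a ha => mem_slowlyOscSet_of_mem V f hVstar hf happrox hquasi hA ha⟩ <;>
    rw [slowlyOscSet_eq V f hVstar hf hquasi]
  · exact one_mem _
  · exact fun _ h₁ _ h₂ => add_mem h₁ h₂
  · exact fun c _ h => SMulMemClass.smul_mem c h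
  · exact fun _ h₁ _ h₂ => mul_mem h₁ h₂
  · exact fun S h => ContinuousLinearMap.star_eq_adjoint S ▸ star_mem h
  · exact fun _ hS hcl => mem_slowlyOscStarSubalgebra_of_mem_closure hC hS hcl

/-- The set of slowly oscillating operators is a unital norm-closed
*-subalgebra of `M(A)`; if moreover for every `a ∈ A`, `R > 0` and `ε > 0` there is `n₀` with
`‖(1 − f_n) T a‖ ≤ ε` and `‖a T (1 − f_n)‖ ≤ ε` for all `n ≥ n₀` and all `T ∈ V_R` with
`‖T‖ ≤ 1`, then it contains `A`. -/
theorem slowlyOscSet_is_unital_closed_starSubalgebra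
    (A : NonUnitalStarSubalgebra ℂ (H →L[ℂ] H)) (hAclosed : IsClosed (A : Set (H →L[ℂ] H)))
    (V : ℝ → Set (H →L[ℂ] H))
    (hVstar : ∀ r : ℝ, ∀ T ∈ V r, ContinuousLinearMap.adjoint T ∈ V r)
    (f : ℕ → (H →L[ℂ] H))
    (hfA : ∀ n, f n ∈ A) (hfpos : ∀ n, (f n).IsPositive) (hfnorm : ∀ n, ‖f n‖ ≤ 1)
    (happrox : ∀ a ∈ A, Tendsto (fun n => ‖f n * a - a‖) atTop (nhds 0))
    (hquasi : ∀ S ∈ idealizer A, Tendsto (fun n => ‖f n * S - S * f n‖) atTop (nhds 0)) :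
    ((1 : H →L[ℂ] H) ∈ slowlyOscSet A V f) ∧
    (∀ S₁ ∈ slowlyOscSet A V f, ∀ S₂ ∈ slowlyOscSet A V f,
      S₁ + S₂ ∈ slowlyOscSet A V f) ∧
    (∀ c : ℂ, ∀ S ∈ slowlyOscSet A V f, c • S ∈ slowlyOscSet A V f) ∧
    (∀ S₁ ∈ slowlyOscSet A V f, ∀ S₂ ∈ slowlyOscSet A V f,
      S₁ * S₂ ∈ slowlyOscSet A V f) ∧
    (∀ S ∈ slowlyOscSet A V f, ContinuousLinearMap.adjoint S ∈ slowlyOscSet A V f) ∧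
    (∀ S ∈ idealizer A, S ∈ closure (slowlyOscSet A V f) → S ∈ slowlyOscSet A V f) ∧
    ((∀ a ∈ A, ∀ R > (0 : ℝ), ∀ ε > (0 : ℝ), ∃ n₀ : ℕ, ∀ n ≥ n₀, ∀ T ∈ V R, ‖T‖ ≤ 1 →
        ‖(1 - f n) * T * a‖ ≤ ε ∧ ‖a * T * (1 - f n)‖ ≤ ε) →
      ∀ a ∈ A, a ∈ slowlyOscSet A V f) :=
  slowlyOscSet_is_unital_closed_starSubalgebra_general A V hVstar f hfpos hfnorm happrox hquasi
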